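/- For a positive real number k and n ≥ 1, the hyperbolic k-Fibonacci quaternion satisfies HF_{k,n}·conj(HF_{k,n}) + HF_{k,n−1}·conj(HF_{k,n−1}) = F_{k,2n−1} − F_{k,2n+1} − F_{k,2n+3} − F_{k,2n+5} (a real scalar), where the product HF·conj(HF) equals the real number F_{k,n}² − F_{k,n+1}² − F_{k,n+2}² − F_{k,n+3}². -/

import Mathlib

noncomputable def kFib (k : ℝ) : ℕ → ℝ
  | 0 => 0
  | 1 => 1
  | (n + 2) => k * kFib k (n + 1) + kFib k n

noncomputable def kLucas (k : ℝ) : ℕ → ℝ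
  | 0 => 2
  | 1 => k
  | (n + 2) => k * kLucas k (n + 1) + kLucas k n

noncomputable def HF (k : ℝ) (n : ℕ) : Fin 4 → ℝ :=
  ![kFib k n, kFib k (n + 1), kFib k (n + 2), kFib k (n + 3)]

noncomputable def HL (k : ℝ) (n : ℕ) : Fin 4 → ℝ :=
  ![kLucas k n, kLucas k (n + 1), kLucas k (n + 2), kLucas k (n + 3)]

def hconj (a : Fin 4 → ℝ) : Fin 4 → ℝ := ![a 0, -a 1, -a 2, -a 3]

def hmul (a b : Fin 4 → ℝ) : Fin 4 → ℝ :=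
  ![a 0 * b 0 + a 1 * b 1 + a 2 * b 2 + a 3 * b 3,
    a 0 * b 1 + a 1 * b 0 + a 2 * b 3 - a 3 * b 2,
    a 0 * b 2 + a 2 * b 0 - a 1 * b 3 + a 3 * b 1,
    a 0 * b 3 + a 3 * b 0 + a 1 * b 2 - a 2 * b 1]

/-! `HF k n · conj (HF k n)` is the real number `F n² - F (n+1)² - F (n+2)² - F (n+3)²`, and
Honsberger's identity `F (m+n+1) = F (m+1) F (n+1) + F m F n` with `m = n` turns each
`F (j+1)² + F j²` into `F (2j+1)`; summing the norms of two consecutive terms pairs the squares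
up exactly in this way. -/

theorem kFib_add_two (k : ℝ) (n : ℕ) : kFib k (n + 2) = k * kFib k (n + 1) + kFib k n := by
  rw [kFib]

theorem kFib_add (k : ℝ) (m n : ℕ) :
    kFib k (m + n + 1) = kFib k (m + 1) * kFib k (n + 1) + kFib k m * kFib k n := by
  induction m generalizing n with
  | zero => simp [kFib]
  | succ m ih =>
    calc kFib k (m + 1 + n + 1) = kFib k (m + (n + 1) + 1) := by ring_nf
      _ = kFib k (m + 1) * kFib k (n + 2) + kFib k m * kFib k (n + 1) := ih (n + 1)
      _ = kFib k (m + 2) * kFib k (n + 1) + kFib k (m + 1) * kFib k n := by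
        rw [kFib_add_two, kFib_add_two]; ring

theorem kFib_two_mul_add_one (k : ℝ) (n : ℕ) :
    kFib k (2 * n + 1) = kFib k (n + 1) ^ 2 + kFib k n ^ 2 := by
  rw [two_mul, kFib_add]; ring

theorem hmul_hconj_self (a : Fin 4 → ℝ) :
    hmul a (hconj a) = ![a 0 ^ 2 - a 1 ^ 2 - a 2 ^ 2 - a 3 ^ 2, 0, 0, 0] := by
  ext i
  fin_cases i <;> simp [hmul, hconj] <;> ring

theorem HF_mul_hconj (k : ℝ) (n : ℕ) :
    hmul (HF k n) (hconj (HF k n)) =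
      ![kFib k n ^ 2 - kFib k (n + 1) ^ 2 - kFib k (n + 2) ^ 2 - kFib k (n + 3) ^ 2, 0, 0, 0] := by
  simp [hmul_hconj_self, HF]

theorem HF_norm_sum_general (k : ℝ) (n : ℕ) (hn : 1 ≤ n) :
    hmul (HF k n) (hconj (HF k n)) + hmul (HF k (n - 1)) (hconj (HF k (n - 1))) =
      ![kFib k (2 * n - 1) - kFib k (2 * n + 1) - kFib k (2 * n + 3) - kFib k (2 * n + 5),
        0, 0, 0] := by
  obtain ⟨m, rfl⟩ : ∃ m, n = m + 1 := ⟨n - 1, by omega⟩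
  rw [HF_mul_hconj, HF_mul_hconj, Nat.add_sub_cancel,
    show 2 * (m + 1) - 1 = 2 * m + 1 by omega,
    show 2 * (m + 1) + 3 = 2 * (m + 2) + 1 by ring,
    show 2 * (m + 1) + 5 = 2 * (m + 3) + 1 by ring,
    kFib_two_mul_add_one, kFib_two_mul_add_one, kFib_two_mul_add_one, kFib_two_mul_add_one]
  simp only [Matrix.cons_add_cons, Matrix.empty_add_empty, add_zero]
  congr 1
  ring

theorem HF_norm_sum (k : ℝ) (hk : 0 < k) (n : ℕ) (hn : 1 ≤ n) :
    hmul (HF k n) (hconj (HF k n)) + hmul (HF k (n - 1)) (hconj (HF k (n - 1))) =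
      ![kFib k (2 * n - 1) - kFib k (2 * n + 1) - kFib k (2 * n + 3) - kFib k (2 * n + 5),
        0, 0, 0] :=
  HF_norm_sum_general k n hn
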